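/- Let C be a small category and U a subterminal presheaf on C. The U-connected reflection functor Psh(C) ⥤ Psh(C), sending a presheaf X to the pushout of the span X ⟵ X × U ⟶ U formed by the two product projections (and acting on morphisms by functoriality of pushouts), preserves finite limits. -/

import Mathlib

open CategoryTheory CategoryTheory.Limits MonoidalCategory

universe u

variable {C : Type u} [SmallCategory C]

/-- The `U`-connected reflection functor `Psh(C) ⥤ Psh(C)`, sending a presheaf `X` to
the pushout of the span `X ⟵ X × U ⟶ U` formed by the two product projections, and
acting on morphisms by functoriality of pushouts. -/
noncomputable def connReflectionFunctor (U : Cᵒᵖ ⥤ Type u) :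
    (Cᵒᵖ ⥤ Type u) ⥤ Cᵒᵖ ⥤ Type u where
  obj X := pushout (CartesianMonoidalCategory.fst X U) (CartesianMonoidalCategory.snd X U)
  map {X Y} f :=
    pushout.map _ _ _ _ f (𝟙 U) (f ⊗ₘ 𝟙 U) (by simp) (by simp)
  map_id X := by
    apply pushout.hom_ext <;> simp
  map_comp {X Y Z} f g := by
    apply pushout.hom_ext <;> simp [MonoidalCategory.tensorHom_def, pushout.map_comp]

/-- The constant functor at `PUnit` preserves limits of any shape. -/
lemma constPUnit_preservesLimitsOfShape {A : Type*} [Category A] {J : Type*} [Category J] :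
    PreservesLimitsOfShape J ((Functor.const A).obj (PUnit.{u+1} : Type u)) where
  preservesLimit {K} := ⟨fun {c} _ => ⟨{
    lift := fun _ => TypeCat.ofHom fun _ => PUnit.unit
    fac := fun s j => ConcreteCategory.hom_ext _ _ fun _ => rfl
    uniq := fun s m _ => ConcreteCategory.hom_ext _ _ fun _ => rfl }⟩⟩

/-- Let `C` be a small category and `U` a subterminal presheaf on
`C`.  The `U`-connected reflection functor `Psh(C) ⥤ Psh(C)`, sending `X` to the
pushout of the span `X ⟵ X × U ⟶ U` of the two product projections, preserves finite
limits. -/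
theorem connReflection_preservesFiniteLimits (U : Cᵒᵖ ⥤ Type u)
    (hU : IsSubterminal U) :
    Nonempty (PreservesFiniteLimits (connReflectionFunctor U)) := by
  constructor
  constructor
  intro J _ _
  apply preservesLimitsOfShape_of_evaluation
  intro k
  haveI hsub : Subsingleton (U.obj k) := ⟨fun u v => by
    have h := hU (yonedaEquiv.symm u) (yonedaEquiv.symm v)
    exact yonedaEquiv.symm.injective h⟩
  set E := (evaluation Cᵒᵖ (Type u)).obj k with hE
  by_cases h : Nonempty (U.obj k)
  · -- `U.obj k` is a singleton; the composite functor is constant at a singleton.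
    haveI : Unique (U.obj k) := uniqueOfSubsingleton h.some
    have key : ∀ X : Cᵒᵖ ⥤ Type u,
        Unique ((connReflectionFunctor U ⋙ E).obj X) := by
      intro X
      set f := CartesianMonoidalCategory.fst X U
      set g := CartesianMonoidalCategory.snd X U
      haveI : IsIso (E.map f) := by
        rw [(isIso_iff_bijective _)]
        constructor
        · intro a b hab
          show a = b
          have : a.2 = b.2 := Subsingleton.elim _ _
          exact Prod.ext hab this
        · intro x
          exact ⟨(x, default), rfl⟩
      haveI : IsIso (pushout.inr (E.map f) (E.map g)) := inferInstance
      let e : U.obj k ≅ E.obj (pushout f g) :=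
        asIso (pushout.inr (E.map f) (E.map g)) ≪≫ PreservesPushout.iso E f g
      exact Equiv.unique e.toEquiv.symm
    haveI := constPUnit_preservesLimitsOfShape (A := Cᵒᵖ ⥤ Type u) (J := J)
    exact preservesLimitsOfShape_of_natIso
      (F := (Functor.const (Cᵒᵖ ⥤ Type u)).obj (PUnit : Type u))
      (NatIso.ofComponents
        (fun X => (@Equiv.equivPUnit _ (key X)).toIso.symm)
        (fun {X Y} η => ConcreteCategory.hom_ext _ _ fun x => @Subsingleton.elim _ (@Unique.instSubsingleton _ (key Y)) _ _))
  · haveI : IsEmpty (U.obj k) := not_nonempty_iff.mp h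
    have key : ∀ X : Cᵒᵖ ⥤ Type u,
        IsIso ((pushout.inl (CartesianMonoidalCategory.fst X U)
          (CartesianMonoidalCategory.snd X U)).app k) := by
      intro X
      set f := CartesianMonoidalCategory.fst X U
      set g := CartesianMonoidalCategory.snd X U
      haveI : IsIso (E.map g) := by
        rw [(isIso_iff_bijective _)]
        haveI : IsEmpty (E.obj U) := inferInstanceAs (IsEmpty (U.obj k))
        haveI : IsEmpty (E.obj (X ⊗ U)) := Function.isEmpty (E.map g)
        exact ⟨fun a => isEmptyElim a, fun x => isEmptyElim x⟩
      have hcomp : (pushout.inl f g).app k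
          = pushout.inl (E.map f) (E.map g) ≫ (PreservesPushout.iso E f g).hom :=
        (PreservesPushout.inl_iso_hom E f g).symm
      rw [hcomp]
      infer_instance
    exact preservesLimitsOfShape_of_natIso (F := E)
      (NatIso.ofComponents
        (fun X => @asIso _ _ _ _ _ (key X))
        (fun {X Y} η => by
          have hnat : η ≫ pushout.inl (CartesianMonoidalCategory.fst Y U)
              (CartesianMonoidalCategory.snd Y U)
            = pushout.inl (CartesianMonoidalCategory.fst X U) (CartesianMonoidalCategory.snd X U)
              ≫ (connReflectionFunctor U).map η := by
            exact (pushout.inl_desc _ _ _).symm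
          exact congr_app hnat k))
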